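/- Let p be a prime, t ≥ 2 an integer, and n any integer. Then Σ_{w ∈ SL₂(ℤ/p^tℤ)} c_{p^t}(d(w) − n) = 0, where d(w) denotes the bottom-right entry of w (lifted to ℤ). -/

import Mathlib

/-!
With `ψ` the standard additive character of `ℤ/q`, `c_q(m) = ∑_{a unit} ψ(a m)`, so it suffices
that `∑_{w ∈ SL₂} ψ(a d(w)) = 0` for every unit `a`. Averaging over the right translates of `w` by
`[[1, x], [0, 1]]` reduces this sum to the upper triangular matrices `[[u⁻¹, b], [0, u]]`, which
gives `q ∑_{u unit} ψ(a u)`. For `q = p^t` with `t ≥ 2`, the element `p^(t-1)` is nonzero and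
nilpotent, so translation by it permutes the units while `ψ(a ·)` is nontrivial on it; hence the
sum over units vanishes.
-/

/-- The Ramanujan sum `c_q(m) = Σ_{a ∈ (ℤ/qℤ)ˣ} e^{2πi a m / q}`. -/
noncomputable def ramanujanSum (q : ℕ) [NeZero q] (m : ℤ) : ℂ :=
  ∑ a : (ZMod q)ˣ,
    Complex.exp (2 * Real.pi * Complex.I * (((a : ZMod q).val : ℂ) * (m : ℂ)) / (q : ℂ))

/-- The bottom-right entry of `w ∈ SL₂(ℤ/qℤ)`, lifted to `ℤ`. -/
def dEntry {q : ℕ} (w : Matrix.SpecialLinearGroup (Fin 2) (ZMod q)) : ℤ :=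
  ((w : Matrix (Fin 2) (Fin 2) (ZMod q)) 1 1).val

open scoped MatrixGroups

namespace Matrix.SpecialLinearGroup

variable {R : Type*} [CommRing R]

def upperUnipotent (x : R) : SL(2, R) :=
  ⟨!![1, x; 0, 1], by simp [det_fin_two_of]⟩

lemma mul_upperUnipotent_apply_one_one (w : SL(2, R)) (x : R) :
    (w * upperUnipotent x) 1 1 = x * w 1 0 + w 1 1 := by
  change ((w : Matrix (Fin 2) (Fin 2) R) * !![1, x; 0, 1]) 1 1 = _
  simp [mul_apply, Fin.sum_univ_two, mul_comm]

def unitsProdEquivBottomLeftEqZero : Rˣ × R ≃ {w : SL(2, R) // w 1 0 = 0} where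
  toFun z := ⟨⟨!![(z.1⁻¹ : Rˣ), z.2; 0, z.1], by simp [det_fin_two_of]⟩, rfl⟩
  invFun w := (Units.mkOfMulEqOne (w.1 1 1) (w.1 0 0) (by
      have hdet := w.1.prop
      rw [det_fin_two, w.2] at hdet
      simpa [mul_comm] using hdet), w.1 0 1)
  left_inv z := by
    ext <;> simp
  right_inv w := by
    ext i j
    fin_cases i <;> fin_cases j <;> simp [w.2, Units.mkOfMulEqOne]

section Sum

variable [Fintype R] [DecidableEq R] {R' : Type*} [CommRing R'] [IsDomain R'] [CharZero R']

lemma sum_addChar_apply_one_one_eq_sum_filter {ψ : AddChar R R'} (hψ : ψ.IsPrimitive) :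
    ∑ w : SL(2, R), ψ (w 1 1) = ∑ w : SL(2, R) with w 1 0 = 0, ψ (w 1 1) := by
  have hR : (Fintype.card R : R') ≠ 0 := Nat.cast_ne_zero.mpr Fintype.card_ne_zero
  refine mul_left_cancel₀ hR ?_
  calc (Fintype.card R : R') * ∑ w : SL(2, R), ψ (w 1 1)
      = ∑ x : R, ∑ w : SL(2, R), ψ ((w * upperUnipotent x) 1 1) := by
        have hinv (x : R) :
            ∑ w : SL(2, R), ψ ((w * upperUnipotent x) 1 1) = ∑ w : SL(2, R), ψ (w 1 1) :=
          Equiv.sum_comp (Equiv.mulRight (upperUnipotent x)) fun w ↦ ψ (w 1 1)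
        simp only [hinv, Finset.sum_const, Finset.card_univ, nsmul_eq_mul]
    _ = ∑ w : SL(2, R), (∑ x : R, ψ (x * w 1 0)) * ψ (w 1 1) := by
        simp only [mul_upperUnipotent_apply_one_one, AddChar.map_add_eq_mul, Finset.sum_mul]
        exact Finset.sum_comm
    _ = (Fintype.card R : R') * ∑ w : SL(2, R) with w 1 0 = 0, ψ (w 1 1) := by
        rw [Finset.sum_filter, Finset.mul_sum]
        refine Finset.sum_congr rfl fun w _ ↦ ?_
        rw [AddChar.sum_mulShift _ hψ]
        split_ifs <;> simp

lemma sum_addChar_apply_one_one {ψ : AddChar R R'} (hψ : ψ.IsPrimitive) :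
    ∑ w : SL(2, R), ψ (w 1 1) = Fintype.card R * ∑ u : Rˣ, ψ u := by
  rw [sum_addChar_apply_one_one_eq_sum_filter hψ,
    Finset.sum_subtype _ fun _ ↦ Finset.mem_filter_univ _,
    ← unitsProdEquivBottomLeftEqZero.sum_comp]
  simp [unitsProdEquivBottomLeftEqZero, Fintype.sum_prod_type, Finset.mul_sum]

end Sum

end Matrix.SpecialLinearGroup

lemma AddChar.IsPrimitive.mulShift_of_isUnit {R R' : Type*} [CommRing R] [CommMonoid R']
    {ψ : AddChar R R'} (hψ : ψ.IsPrimitive) {u : R} (hu : IsUnit u) : (ψ.mulShift u).IsPrimitive :=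
  fun _ hb ↦ by
    rw [AddChar.mulShift_mulShift]
    exact hψ (hu.mul_right_eq_zero.not.mpr hb)

lemma AddChar.sum_units_eq_zero_of_isNilpotent {R R' : Type*} [CommRing R] [Fintype R]
    [DecidableEq R] [CommRing R'] [IsDomain R'] (ψ : AddChar R R') {c : R}
    (hc : IsNilpotent c) (hψc : ψ c ≠ 1) : ∑ u : Rˣ, ψ u = 0 := by
  let shift (u : Rˣ) : Rˣ := (hc.isUnit_add_left_of_commute u.isUnit (Commute.all _ _)).unit
  have hshift : Function.Bijective shift := Finite.injective_iff_bijective.mp fun u v huv ↦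
    Units.ext (add_right_cancel (congrArg Units.val huv))
  have h := Fintype.sum_bijective shift hshift (fun u ↦ ψ (u + c)) (fun u ↦ ψ u) fun _ ↦ rfl
  simp only [AddChar.map_add_eq_mul, ← Finset.sum_mul] at h
  exact eq_zero_of_mul_eq_self_right hψc h

lemma ZMod.isNilpotent_natCast_pow (p : ℕ) {k : ℕ} (hk : k ≠ 0) (t : ℕ) :
    IsNilpotent ((p : ZMod (p ^ t)) ^ k) :=
  IsNilpotent.pow_of_pos ⟨t, by rw [← Nat.cast_pow, ZMod.natCast_self]⟩ hk

lemma ZMod.natCast_pow_ne_zero {p : ℕ} (hp : 1 < p) {k t : ℕ} (hkt : k < t) :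
    (p : ZMod (p ^ t)) ^ k ≠ 0 := by
  rw [← Nat.cast_pow, Ne, ZMod.natCast_eq_zero_iff, Nat.pow_dvd_pow_iff_le_right hp]
  omega

lemma ramanujanSum_eq_sum_stdAddChar (q : ℕ) [NeZero q] (m : ℤ) :
    ramanujanSum q m = ∑ a : (ZMod q)ˣ, ZMod.stdAddChar ((a : ZMod q) * (m : ZMod q)) := by
  refine Finset.sum_congr rfl fun a _ ↦ ?_
  rw [show (a : ZMod q) * (m : ZMod q) = (((a : ZMod q).val * m : ℤ) : ZMod q) by simp,
    ZMod.stdAddChar_coe]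
  push_cast
  ring_nf

lemma intCast_dEntry {q : ℕ} [NeZero q] (w : SL(2, ZMod q)) : (dEntry w : ZMod q) = w 1 1 := by
  simp [dEntry]

theorem stmt2 (p : ℕ) [Fact p.Prime] (t : ℕ) (ht : 2 ≤ t) (n : ℤ) :
    ∑ w : Matrix.SpecialLinearGroup (Fin 2) (ZMod (p ^ t)),
      ramanujanSum (p ^ t) (dEntry w - n) = 0 := by
  set ψ : AddChar (ZMod (p ^ t)) ℂ := ZMod.stdAddChar
  have hψ : ψ.IsPrimitive := ZMod.isPrimitive_stdAddChar _
  have hsum (a : (ZMod (p ^ t))ˣ) : ∑ w : SL(2, ZMod (p ^ t)), ψ (a * w 1 1) = 0 := by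
    have hc : ψ.mulShift a ((p : ZMod (p ^ t)) ^ (t - 1)) ≠ 1 := by
      rw [AddChar.mulShift_apply, Ne, hψ.zmod_char_eq_one_iff, a.isUnit.mul_right_eq_zero]
      exact ZMod.natCast_pow_ne_zero (Fact.out : p.Prime).one_lt (by omega)
    have hunits := (ψ.mulShift a).sum_units_eq_zero_of_isNilpotent
      (ZMod.isNilpotent_natCast_pow p (by omega) t) hc
    have h := Matrix.SpecialLinearGroup.sum_addChar_apply_one_one (hψ.mulShift_of_isUnit a.isUnit)
    rw [hunits, mul_zero] at h
    simpa only [AddChar.mulShift_apply] using h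
  simp only [ramanujanSum_eq_sum_stdAddChar, Int.cast_sub, intCast_dEntry, mul_sub,
    AddChar.map_sub_eq_div]
  rw [Finset.sum_comm]
  exact Finset.sum_eq_zero fun a _ ↦ by rw [← Finset.sum_div, hsum a, zero_div]
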